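/- Under the logit discrete choice model, for every r ≠ 1, R is conditionally independent of L_{(-r)} given L_{(r)} and the event R ∈ {1, r}. -/
import Mathlib


open Finset MeasureTheory

open Classical in
noncomputable def pr {Ω : Type*} [Fintype Ω] (P : Ω → ℝ) (E : Ω → Prop) : ℝ :=
  ∑ ω, if E ω then P ω else 0

noncomputable def cpr {Ω : Type*} [Fintype Ω] (P : Ω → ℝ) (E F : Ω → Prop) : ℝ :=
  pr P (fun ω => E ω ∧ F ω) / pr P F

noncomputable def ex {Ω : Type*} [Fintype Ω] (P : Ω → ℝ) (U : Ω → ℝ) : ℝ :=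
  ∑ ω, P ω * U ω

open Classical in
noncomputable def cex {Ω : Type*} [Fintype Ω] (P : Ω → ℝ) (U : Ω → ℝ) (F : Ω → Prop) : ℝ :=
  (∑ ω, if F ω then P ω * U ω else 0) / pr P F

open Classical in
lemma pr_congr' {Ω : Type*} [Fintype Ω] (P : Ω → ℝ) {E F : Ω → Prop}
    (h : ∀ ω, E ω ↔ F ω) : pr P E = pr P F := by
  have hEF : E = F := funext fun ω => propext (h ω)
  rw [hEF]

open Classical in
lemma pr_nonneg' {Ω : Type*} [Fintype Ω] {P : Ω → ℝ} (hP : ∀ ω, 0 ≤ P ω)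
    (E : Ω → Prop) : 0 ≤ pr P E := by
  unfold pr
  apply Finset.sum_nonneg
  intro ω _
  split_ifs
  · exact hP ω
  · exact le_refl 0

open Classical in
lemma pr_mono' {Ω : Type*} [Fintype Ω] {P : Ω → ℝ} (hP : ∀ ω, 0 ≤ P ω)
    {E F : Ω → Prop} (h : ∀ ω, E ω → F ω) : pr P E ≤ pr P F := by
  unfold pr
  apply Finset.sum_le_sum
  intro ω _
  split_ifs with h1 h2
  · exact le_refl _
  · exact absurd (h ω h1) h2
  · exact hP ω
  · exact le_refl 0

open Classical in
lemma pr_add_disjoint' {Ω : Type*} [Fintype Ω] (P : Ω → ℝ) {E F : Ω → Prop}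
    (h : ∀ ω, ¬(E ω ∧ F ω)) :
    pr P (fun ω => E ω ∨ F ω) = pr P E + pr P F := by
  unfold pr
  rw [← Finset.sum_add_distrib]
  apply Finset.sum_congr rfl
  intro ω _
  by_cases hE : E ω <;> by_cases hF : F ω <;> simp [hE, hF] <;> exact absurd ⟨hE, hF⟩ (h ω)

open Classical in
lemma pr_fiber' {Ω A : Type*} [Fintype Ω] (P : Ω → ℝ) (L : Ω → A) (E : Ω → Prop) :
    pr P E = ∑ l ∈ Finset.image L Finset.univ, pr P (fun ω => E ω ∧ L ω = l) := by
  unfold pr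
  rw [Finset.sum_comm]
  apply Finset.sum_congr rfl
  intro ω _
  by_cases hE : E ω
  · simp only [hE, true_and]
    rw [Finset.sum_ite_eq]
    simp [Finset.mem_image]
  · simp [hE]

/-- Under the LDCM, for every incomplete pattern `r`, `R` is conditionally
independent of the missing components `L_(-r)` given the observed components `L_(r)` and
the event `R ∈ {complete case, r}`. Pattern `0` is the complete-case pattern. -/
theorem stmt5 {Ω A : Type*} [Fintype Ω] {J : ℕ} {B C : Fin (J + 1) → Type*}
    (P : Ω → ℝ) (hP : ∀ ω, 0 ≤ P ω) (hPsum : ∑ ω, P ω = 1)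
    (R : Ω → Fin (J + 1)) (L : Ω → A)
    (O : (r : Fin (J + 1)) → A → B r) (M : (r : Fin (J + 1)) → A → C r)
    (Odds : (r : Fin (J + 1)) → B r → ℝ) (hOdds : ∀ r b, 0 < Odds r b)
    (hLDCM : ∀ r, r ≠ 0 → ∀ l : A, 0 < pr P (fun ω => L ω = l) →
      cpr P (fun ω => R ω = r) (fun ω => L ω = l) =
        Odds r (O r l) / (1 + ∑ s ∈ Finset.univ.erase (0 : Fin (J + 1)), Odds s (O s l)))
    (hCC : ∀ l : A, 0 < pr P (fun ω => L ω = l) →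
      cpr P (fun ω => R ω = 0) (fun ω => L ω = l) =
        1 / (1 + ∑ s ∈ Finset.univ.erase (0 : Fin (J + 1)), Odds s (O s l)))
    (r : Fin (J + 1)) (hr : r ≠ 0) (r' : Fin (J + 1)) (hr' : r' = 0 ∨ r' = r)
    (a : C r) (b : B r)
    (hb : 0 < pr P (fun ω => O r (L ω) = b ∧ (R ω = 0 ∨ R ω = r))) :
    cpr P (fun ω => R ω = r' ∧ M r (L ω) = a)
        (fun ω => O r (L ω) = b ∧ (R ω = 0 ∨ R ω = r)) =
      cpr P (fun ω => R ω = r') (fun ω => O r (L ω) = b ∧ (R ω = 0 ∨ R ω = r)) *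
        cpr P (fun ω => M r (L ω) = a) (fun ω => O r (L ω) = b ∧ (R ω = 0 ∨ R ω = r)) := by
  classical
  have h1k : (0:ℝ) < 1 + Odds r b := by have := hOdds r b; linarith
  set num : ℝ := if r' = (0 : Fin (J + 1)) then 1 else Odds r b with hnum
  set c : ℝ := num / (1 + Odds r b) with hc
  -- key pointwise lemma
  have key : ∀ l : A, O r l = b →
      pr P (fun ω => R ω = r' ∧ L ω = l) =
        c * pr P (fun ω => (R ω = 0 ∨ R ω = r) ∧ L ω = l) := by
    intro l hl
    have hsplit : pr P (fun ω => (R ω = 0 ∨ R ω = r) ∧ L ω = l) =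
        pr P (fun ω => R ω = 0 ∧ L ω = l) + pr P (fun ω => R ω = r ∧ L ω = l) := by
      rw [pr_congr' P (show ∀ ω, ((R ω = 0 ∨ R ω = r) ∧ L ω = l) ↔
          ((R ω = 0 ∧ L ω = l) ∨ (R ω = r ∧ L ω = l)) from fun ω => by tauto)]
      refine pr_add_disjoint' P ?_
      rintro ω ⟨⟨h1, -⟩, ⟨h2, -⟩⟩
      exact hr (by rw [← h2, h1])
    by_cases hLl : 0 < pr P (fun ω => L ω = l)
    · have hLne : pr P (fun ω => L ω = l) ≠ 0 := ne_of_gt hLl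
      have hDl : (0:ℝ) < 1 + ∑ s ∈ Finset.univ.erase (0 : Fin (J + 1)), Odds s (O s l) := by
        have h1 : 0 ≤ ∑ s ∈ Finset.univ.erase (0 : Fin (J + 1)), Odds s (O s l) :=
          Finset.sum_nonneg fun s _ => (hOdds s _).le
        linarith
      have h0 := hCC l hLl
      have hrr := hLDCM r hr l hLl
      unfold cpr at h0 hrr
      rw [div_eq_div_iff hLne hDl.ne'] at h0 hrr
      rw [hl] at hrr
      have hcancel : Odds r b * pr P (fun ω => R ω = 0 ∧ L ω = l) =
          pr P (fun ω => R ω = r ∧ L ω = l) := by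
        refine mul_right_cancel₀ hDl.ne' ?_
        linear_combination Odds r b * h0 - hrr
      rw [hsplit]
      rcases hr' with h | h
      · rw [h, hc, hnum, if_pos h, div_mul_eq_mul_div, eq_div_iff h1k.ne', one_mul]
        linear_combination hcancel
      · have hr'ne : r' ≠ 0 := by rw [h]; exact hr
        rw [h, hc, hnum, if_neg hr'ne, div_mul_eq_mul_div, eq_div_iff h1k.ne']
        linear_combination -hcancel
    · have hpl0 : pr P (fun ω => L ω = l) = 0 :=
        le_antisymm (not_lt.mp hLl) (pr_nonneg' hP _)
      have z1 : pr P (fun ω => R ω = r' ∧ L ω = l) = 0 :=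
        le_antisymm (hpl0 ▸ pr_mono' hP (fun ω h => h.2)) (pr_nonneg' hP _)
      have z2 : pr P (fun ω => (R ω = 0 ∨ R ω = r) ∧ L ω = l) = 0 :=
        le_antisymm (hpl0 ▸ pr_mono' hP (fun ω h => h.2)) (pr_nonneg' hP _)
      rw [z1, z2, mul_zero]
  -- main decomposition
  have main : ∀ Q : A → Prop,
      pr P (fun ω => R ω = r' ∧ Q (L ω) ∧ O r (L ω) = b) =
      c * pr P (fun ω => Q (L ω) ∧ O r (L ω) = b ∧ (R ω = 0 ∨ R ω = r)) := by
    intro Q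
    rw [pr_fiber' P L (fun ω => R ω = r' ∧ Q (L ω) ∧ O r (L ω) = b),
        pr_fiber' P L (fun ω => Q (L ω) ∧ O r (L ω) = b ∧ (R ω = 0 ∨ R ω = r)),
        Finset.mul_sum]
    apply Finset.sum_congr rfl
    intro l _
    by_cases hQ : Q l ∧ O r l = b
    · rw [pr_congr' P (show ∀ ω,
          ((R ω = r' ∧ Q (L ω) ∧ O r (L ω) = b) ∧ L ω = l) ↔ (R ω = r' ∧ L ω = l) from
          fun ω => ⟨fun ⟨⟨h1, _, _⟩, h4⟩ => ⟨h1, h4⟩,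
            fun ⟨h1, h4⟩ => ⟨⟨h1, by rw [h4]; exact hQ.1, by rw [h4]; exact hQ.2⟩, h4⟩⟩),
        pr_congr' P (show ∀ ω,
          ((Q (L ω) ∧ O r (L ω) = b ∧ (R ω = 0 ∨ R ω = r)) ∧ L ω = l) ↔
            ((R ω = 0 ∨ R ω = r) ∧ L ω = l) from
          fun ω => ⟨fun ⟨⟨_, _, h3⟩, h4⟩ => ⟨h3, h4⟩,
            fun ⟨h3, h4⟩ => ⟨⟨by rw [h4]; exact hQ.1, by rw [h4]; exact hQ.2, h3⟩, h4⟩⟩)]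
      exact key l hQ.2
    · rw [pr_congr' P (show ∀ ω,
          ((R ω = r' ∧ Q (L ω) ∧ O r (L ω) = b) ∧ L ω = l) ↔ False from
          fun ω => ⟨fun ⟨⟨_, h2, h3⟩, h4⟩ => hQ ⟨h4 ▸ h2, h4 ▸ h3⟩, False.elim⟩),
        pr_congr' P (show ∀ ω,
          ((Q (L ω) ∧ O r (L ω) = b ∧ (R ω = 0 ∨ R ω = r)) ∧ L ω = l) ↔ False from
          fun ω => ⟨fun ⟨⟨h2, h3, _⟩, h4⟩ => hQ ⟨h4 ▸ h2, h4 ▸ h3⟩, False.elim⟩)]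
      simp [pr]
  have hr'imp : ∀ ω : Ω, R ω = r' → (R ω = 0 ∨ R ω = r) := by
    intro ω h
    rcases hr' with h' | h' <;> rw [h, h'] <;> tauto
  have hFne : pr P (fun ω => O r (L ω) = b ∧ (R ω = 0 ∨ R ω = r)) ≠ 0 := ne_of_gt hb
  have e1 : pr P (fun ω => (R ω = r' ∧ M r (L ω) = a) ∧
        (O r (L ω) = b ∧ (R ω = 0 ∨ R ω = r))) =
      c * pr P (fun ω => M r (L ω) = a ∧ (O r (L ω) = b ∧ (R ω = 0 ∨ R ω = r))) := by
    rw [pr_congr' P (show ∀ ω, ((R ω = r' ∧ M r (L ω) = a) ∧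
        (O r (L ω) = b ∧ (R ω = 0 ∨ R ω = r))) ↔
        (R ω = r' ∧ M r (L ω) = a ∧ O r (L ω) = b) from
        fun ω => ⟨fun ⟨⟨h1, h2⟩, h3, _⟩ => ⟨h1, h2, h3⟩,
          fun ⟨h1, h2, h3⟩ => ⟨⟨h1, h2⟩, h3, hr'imp ω h1⟩⟩),
      main (fun l => M r l = a)]
  have e2 : pr P (fun ω => R ω = r' ∧ (O r (L ω) = b ∧ (R ω = 0 ∨ R ω = r))) =
      c * pr P (fun ω => O r (L ω) = b ∧ (R ω = 0 ∨ R ω = r)) := by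
    rw [pr_congr' P (show ∀ ω, (R ω = r' ∧ (O r (L ω) = b ∧ (R ω = 0 ∨ R ω = r))) ↔
        (R ω = r' ∧ (fun _ : A => True) (L ω) ∧ O r (L ω) = b) from
        fun ω => ⟨fun ⟨h1, h3, _⟩ => ⟨h1, trivial, h3⟩,
          fun ⟨h1, _, h3⟩ => ⟨h1, h3, hr'imp ω h1⟩⟩),
      main (fun _ => True)]
    congr 1
    exact pr_congr' P (fun ω => by tauto)
  unfold cpr
  rw [e1, e2]
  field_simp
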